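/- Let g : ℝ² \ {0} → ℂ be measurable and radially symmetric (g(η) depends only on |η|), and let ξ ∈ ℝ² \ {0} be such that ∫_{ℝ²} |g(η)| |g(ξ−η)| dη < ∞. Then ∫_{ℝ²} sign(ξ×η) g(η) g(ξ−η) sin(θ(ξ,η) − θ(ξ,ξ−η)) dη = 0, where ξ×η := ξ₁η₂ − ξ₂η₁, sign is the sign function (with sign(0) = 0), and θ(u,w) ∈ [0,π] is the Euclidean angle between nonzero vectors u, w ∈ ℝ². -/

import Mathlib

open MeasureTheory Set

/-- The planar cross product `ξ×η = ξ₁η₂ − ξ₂η₁`. -/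
noncomputable def cross (ξ η : EuclideanSpace ℝ (Fin 2)) : ℝ := ξ 0 * η 1 - ξ 1 * η 0

/-!
The reflection across the line `ℝ ξ` preserves Lebesgue measure, norms and `ξ`, hence `g`, the
two angles `θ(ξ, η)`, `θ(ξ, ξ - η)`, and flips the sign of `ξ × η`. So the integrand is odd
under this measure-preserving involution and its integral vanishes.
-/

open InnerProductGeometry

theorem MeasureTheory.MeasurePreserving.integral_eq_zero_of_comp_eq_neg {α E : Type*}
    [MeasurableSpace α] [NormedAddCommGroup E] [NormedSpace ℝ E] {μ : Measure α} {e : α → α}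
    (he : MeasurePreserving e μ μ) (he' : MeasurableEmbedding e) {f : α → E}
    (hf : ∀ x, f (e x) = -f x) : ∫ x, f x ∂μ = 0 := by
  have : IsAddTorsionFree E := .of_isTorsionFree ℝ E
  simp_rw [← self_eq_neg, ← integral_neg, ← hf, he.integral_comp he']

section Reflection

variable {V : Type*} [NormedAddCommGroup V] [InnerProductSpace ℝ V] (K : Submodule ℝ V)
  [K.HasOrthogonalProjection]

theorem Submodule.reflection_add_self_mem (x : V) : K.reflection x + x ∈ K := by
  rw [K.reflection_apply, sub_add_cancel]
  exact nsmul_mem (K.starProjection_apply_mem x) 2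

theorem InnerProductGeometry.angle_reflection_right_of_mem {v : V} (hv : v ∈ K) (w : V) :
    angle v (K.reflection w) = angle v w := by
  conv_lhs => rw [← K.reflection_mem_subspace_eq_self hv]
  exact K.reflection.toLinearIsometry.angle_map v w

end Reflection

theorem cross_add_right (ξ η η' : EuclideanSpace ℝ (Fin 2)) :
    cross ξ (η + η') = cross ξ η + cross ξ η' := by
  simp only [cross, PiLp.add_apply]; ring

theorem cross_smul_self (ξ : EuclideanSpace ℝ (Fin 2)) (c : ℝ) : cross ξ (c • ξ) = 0 := by
  simp only [cross, PiLp.smul_apply, smul_eq_mul]; ring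

theorem cross_reflection_span_singleton (ξ η : EuclideanSpace ℝ (Fin 2)) :
    cross ξ ((ℝ ∙ ξ).reflection η) = -cross ξ η := by
  obtain ⟨c, hc⟩ := Submodule.mem_span_singleton.mp ((ℝ ∙ ξ).reflection_add_self_mem η)
  have := cross_add_right ξ ((ℝ ∙ ξ).reflection η) η
  rw [← hc, cross_smul_self] at this
  linarith

theorem stmt18_general (g : EuclideanSpace ℝ (Fin 2) → ℂ)
    (hrad : ∀ η η' : EuclideanSpace ℝ (Fin 2), ‖η‖ = ‖η'‖ → g η = g η')
    (ξ : EuclideanSpace ℝ (Fin 2)) :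
    ∫ η : EuclideanSpace ℝ (Fin 2),
      (Real.sign (cross ξ η) *
        Real.sin (InnerProductGeometry.angle ξ η - InnerProductGeometry.angle ξ (ξ - η))) •
        (g η * g (ξ - η)) = 0 := by
  have hξ : ξ ∈ ℝ ∙ ξ := Submodule.mem_span_singleton_self ξ
  refine (ℝ ∙ ξ).reflection.measurePreserving.integral_eq_zero_of_comp_eq_neg
    (ℝ ∙ ξ).reflection.toHomeomorph.measurableEmbedding fun η => ?_
  have hsub : ξ - (ℝ ∙ ξ).reflection η = (ℝ ∙ ξ).reflection (ξ - η) := by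
    rw [map_sub, Submodule.reflection_mem_subspace_eq_self hξ]
  simp only [hsub, cross_reflection_span_singleton, angle_reflection_right_of_mem _ hξ,
    hrad _ _ (LinearIsometryEquiv.norm_map _ _), Real.sign_neg, neg_mul, neg_smul]

theorem stmt18 (g : EuclideanSpace ℝ (Fin 2) → ℂ) (hmeas : Measurable g)
    (hrad : ∀ η η' : EuclideanSpace ℝ (Fin 2), ‖η‖ = ‖η'‖ → g η = g η')
    (ξ : EuclideanSpace ℝ (Fin 2)) (hξ : ξ ≠ 0)
    (hint : Integrable (fun η => ‖g η‖ * ‖g (ξ - η)‖)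
      (volume : Measure (EuclideanSpace ℝ (Fin 2)))) :
    ∫ η : EuclideanSpace ℝ (Fin 2),
      (Real.sign (cross ξ η) *
        Real.sin (InnerProductGeometry.angle ξ η - InnerProductGeometry.angle ξ (ξ - η))) •
        (g η * g (ξ - η)) = 0 :=
  stmt18_general g hrad ξ
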